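/- For any m ≥ 1 and integers 1 ≤ a_1 < a_2 < ... < a_{m+2} ≤ n, the sum over i from 1 to m+2 of the top-dimensional stair convex chains stc^m_m(a_1, ..., â_i, ..., a_{m+2}) (where â_i means a_i is omitted) equals the zero chain in C_m(G[n]^m; Z_2). -/

import Mathlib

/-- A cell of a grid complex `G[n]^m`: a list of `m` factors, each either a
vertex `{a}` (encoded `(a, false)`) or a unit interval `[a, a+1]` (encoded `(a, true)`). -/
abbrev GCell := List (ℕ × Bool)

/-- Cellular chains with `ℤ/2` coefficients. -/
abbrev GChain := GCell →₀ ZMod 2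

/-- Product of chains, induced by concatenation of cells. -/
noncomputable def prodC (α β : GChain) : GChain :=
  α.sum fun c x => β.sum fun d y => Finsupp.single (c ++ d) (x * y)

/-- The vertex `{a}` of `G[n]`, as a chain. -/
noncomputable def vtx (a : ℕ) : GChain := Finsupp.single [(a, false)] 1

/-- The unit interval `[a, a+1]` of `G[n]`, as a chain. -/
noncomputable def seg (a : ℕ) : GChain := Finsupp.single [(a, true)] 1

/-- The 1-chain `[a,b] = [a,a+1] + ... + [b-1,b]` (symmetrized so `[b,a] = [a,b]`). -/
noncomputable def intervalC (a b : ℕ) : GChain :=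
  ∑ j ∈ Finset.Ico (min a b) (max a b), seg j

/-- The diagonal vertex `(a, ..., a)` of `G[n]^m`. -/
noncomputable def diag (m a : ℕ) : GChain := Finsupp.single (List.replicate m (a, false)) 1

/-- Stair convex chains, with the list of parameters in *reverse* (decreasing) order. -/
noncomputable def stcR : ℕ → List ℕ → GChain
  | 0, [_] => Finsupp.single [] 1
  | 0, _ => 0
  | _ + 1, [] => 0
  | m + 1, [a] => prodC (stcR m [a]) (vtx a)
  | m + 1, b :: c :: rest =>
      prodC (stcR m (c :: rest)) (intervalC c b) + prodC (stcR m (b :: c :: rest)) (vtx b)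

/-- The stair convex chain `stc^m_k (a₁, ..., a_{k+1})` where the parameters are
given as the (increasing) list `l = [a₁, ..., a_{k+1}]` with `k = l.length - 1`. -/
noncomputable def stc (m : ℕ) (l : List ℕ) : GChain := stcR m l.reverse

/-- Boundary of a cell, via the product rule `∂(σ×τ) = ∂σ×τ + σ×∂τ`,
`∂{a} = 0`, `∂[a,a+1] = {a} + {a+1}`. -/
noncomputable def bndCell : GCell → GChain
  | [] => 0
  | (a, false) :: rest => prodC (vtx a) (bndCell rest)
  | (a, true) :: rest =>
      prodC (vtx a + vtx (a + 1)) (Finsupp.single rest 1) + prodC (seg a) (bndCell rest)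

/-- The boundary operator on chains, extended linearly. -/
noncomputable def bnd (α : GChain) : GChain := α.sum fun c x => x • bndCell c

/-- Ordered product of a list of chains. -/
noncomputable def bigProd (l : List GChain) : GChain := l.foldr prodC (Finsupp.single [] 1)

/-- `c` is a cell of the grid complex `G[n]^m`. -/
def isCellOf (m n : ℕ) (c : GCell) : Prop :=
  c.length = m ∧ ∀ e ∈ c, 1 ≤ e.1 ∧ (if e.2 then e.1 + 1 else e.1) ≤ n

/-- Dimension of a cell: the number of interval factors. -/
def dimCell (c : GCell) : ℕ := (c.filter fun e => e.2).length

/-!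
Modulo 2 the symmetrized interval chain is a coboundary: `[a,b] = P a + P b` with
`P t = [0,1] + ... + [t-1,t]`, hence `[a,b] + [b,c] + [a,c] = 0` for all `a, b, c`.
On a list of `m+1` parameters the stair chain `stc^m_m` is the product
`S × [a_m,a_{m+1}]` with `S = stc^{m-1}_{m-1}(a₁, ..., a_m)`. In the sum over the omitted
`aᵢ` of `(a₁, ..., a_{m+2})`, the terms with `i ≤ m` contribute
`(∑_{i ≤ m} stc^{m-1}_{m-1}(a₁, ..., âᵢ, ..., a_{m+1})) × [a_{m+1},a_{m+2}]`, and by induction on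
`m` that inner sum is `S`. All terms then carry the factor `S`, and the remaining factors add up to
`[a_{m+1},a_{m+2}] + [a_m,a_{m+2}] + [a_m,a_{m+1}] = 0`.
-/

lemma prodC_zero_left (β : GChain) : prodC 0 β = 0 := Finsupp.sum_zero_index

lemma prodC_add_right (α β β' : GChain) :
    prodC α (β + β') = prodC α β + prodC α β' := by
  unfold prodC
  rw [← Finsupp.sum_add]
  refine Finsupp.sum_congr fun c _ => Finsupp.sum_add_index ?_ ?_
  · simp
  · simp [mul_add, Finsupp.single_add]

lemma prodC_finsetSum_left {ι : Type*} (s : Finset ι) (g : ι → GChain) (β : GChain) :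
    prodC (∑ i ∈ s, g i) β = ∑ i ∈ s, prodC (g i) β :=
  (Finsupp.sum_finsetSum_index (by simp)
    (by simp [add_mul, Finsupp.single_add, Finsupp.sum_add])).symm

noncomputable def prefixC (t : ℕ) : GChain := ∑ j ∈ Finset.range t, seg j

lemma intervalC_comm (a b : ℕ) : intervalC a b = intervalC b a := by
  simp only [intervalC, min_comm, max_comm]

lemma intervalC_eq_prefixC_add (a b : ℕ) : intervalC a b = prefixC a + prefixC b := by
  wlog hab : a ≤ b generalizing a b
  · rw [intervalC_comm, add_comm]
    exact this b a (by omega)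
  rw [intervalC, min_eq_left hab, max_eq_right hab, Finset.sum_Ico_eq_sub _ hab,
    ZModModule.sub_eq_add, add_comm, prefixC, prefixC]

lemma intervalC_add_intervalC (x y z : ℕ) : intervalC x y + intervalC y z = intervalC x z := by
  simp only [intervalC_eq_prefixC_add]
  exact ZModModule.add_add_add_cancel _ _ _

noncomputable def stcTop : List ℕ → GChain
  | [] => 0
  | [_] => Finsupp.single [] 1
  | b :: c :: rest => prodC (stcTop (c :: rest)) (intervalC c b)

lemma stcR_eq_zero_of_length_le : ∀ (m : ℕ) (l : List ℕ), m + 2 ≤ l.length → stcR m l = 0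
  | 0, _ :: _ :: _, _ => rfl
  | m + 1, b :: c :: rest, hl => by
    rw [stcR, stcR_eq_zero_of_length_le m (c :: rest) (by simp at hl ⊢; omega),
      stcR_eq_zero_of_length_le m (b :: c :: rest) (by simp at hl ⊢; omega),
      prodC_zero_left, prodC_zero_left, add_zero]

lemma stcR_eq_stcTop : ∀ (m : ℕ) (l : List ℕ), l.length = m + 1 → stcR m l = stcTop l
  | 0, [_], _ => rfl
  | m + 1, b :: c :: rest, hl => by
    rw [stcR, stcR_eq_stcTop m (c :: rest) (by simpa using hl),
      stcR_eq_zero_of_length_le m (b :: c :: rest) (by simp at hl ⊢; omega),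
      prodC_zero_left, add_zero, stcTop]

lemma stc_eq_stcTop_reverse {m : ℕ} {l : List ℕ} (hl : l.length = m + 1) :
    stc m l = stcTop l.reverse :=
  stcR_eq_stcTop m _ (by simpa using hl)

lemma sum_stcTop_eraseIdx (r : List ℕ) (hr : 2 ≤ r.length) :
    ∑ i ∈ Finset.range r.length, stcTop (r.eraseIdx i) = 0 := by
  obtain ⟨x, y, t, rfl⟩ : ∃ x y t, r = x :: y :: t := by
    match r, hr with
    | x :: y :: t, _ => exact ⟨x, y, t, rfl⟩
  clear hr
  induction t generalizing x y with
  | nil =>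
    simp only [List.length_cons, List.length_nil, Finset.sum_range_succ, Finset.sum_range_zero]
    rw [zero_add]
    exact ZModModule.add_self _
  | cons z t ih =>
    set T := stcTop (z :: t)
    have hsum : ∑ j ∈ Finset.range (z :: t).length, stcTop (y :: (z :: t).eraseIdx j) = T := by
      have h := ih y z
      rw [List.length_cons (a := y), Finset.sum_range_succ'] at h
      simp only [List.eraseIdx_cons_succ, List.eraseIdx_cons_zero] at h
      exact sub_eq_zero.mp ((ZModModule.sub_eq_add _ _).trans h)
    rw [List.length_cons, Finset.sum_range_succ', List.length_cons, Finset.sum_range_succ']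
    simp only [List.eraseIdx_cons_succ, List.eraseIdx_cons_zero, stcTop.eq_3]
    rw [← prodC_finsetSum_left, hsum, ← intervalC_add_intervalC z y x, prodC_add_right,
      add_comm (prodC T (intervalC z y)), ← add_assoc, ZModModule.add_self, zero_add,
      ZModModule.add_self]

lemma List.reverse_eraseIdx {α : Type*} (l : List α) {i : ℕ} (h : i < l.length) :
    (l.eraseIdx i).reverse = l.reverse.eraseIdx (l.length - 1 - i) := by
  rw [List.eraseIdx_eq_take_drop_succ l i, List.eraseIdx_eq_take_drop_succ l.reverse,
    List.reverse_append, List.take_reverse, List.drop_reverse,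
    show l.length - (l.length - 1 - i) = i + 1 by omega,
    show l.length - (l.length - 1 - i + 1) = i by omega]

lemma sum_range_eraseIdx_reverse {α M : Type*} [AddCommMonoid M] (f : List α → M) (l : List α) :
    ∑ i ∈ Finset.range l.length, f (l.eraseIdx i).reverse =
      ∑ i ∈ Finset.range l.length, f (l.reverse.eraseIdx i) := by
  rw [← Finset.sum_range_reflect (fun i => f (l.reverse.eraseIdx i))]
  exact Finset.sum_congr rfl fun i hi => by
    rw [List.reverse_eraseIdx l (Finset.mem_range.mp hi)]

theorem stmt4_general (m : ℕ) (a : Fin (m + 2) → ℕ) :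
    ∑ i : Fin (m + 2), stc m ((List.ofFn a).eraseIdx i) = 0 := by
  set l := List.ofFn a
  have hlen : l.length = m + 2 := List.length_ofFn
  calc ∑ i : Fin (m + 2), stc m (l.eraseIdx i)
      = ∑ i ∈ Finset.range l.length, stcTop (l.eraseIdx i).reverse := by
        rw [Fin.sum_univ_eq_sum_range (fun i => stc m (l.eraseIdx i)), hlen]
        refine Finset.sum_congr rfl fun i hi => stc_eq_stcTop_reverse ?_
        rw [List.length_eraseIdx_of_lt (by simp at hi; omega), hlen]
        omega
    _ = ∑ i ∈ Finset.range l.reverse.length, stcTop (l.reverse.eraseIdx i) := by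
        rw [sum_range_eraseIdx_reverse, List.length_reverse]
    _ = 0 := sum_stcTop_eraseIdx _ (by simp [hlen])

/-- For `m ≥ 1` and `1 ≤ a₁ < ... < a_{m+2} ≤ n`, the sum over `i` of the
top-dimensional stair convex chains `stc^m_m(a₁, ..., âᵢ, ..., a_{m+2})` vanishes
in `C_m(G[n]^m; ℤ/2)`. -/
theorem stmt4 (n m : ℕ) (hm : 1 ≤ m)
    (a : Fin (m + 2) → ℕ) (ha : StrictMono a) (h1 : 1 ≤ a 0)
    (hn : a (Fin.last (m + 1)) ≤ n) :
    ∑ i : Fin (m + 2), stc m ((List.ofFn a).eraseIdx i) = 0 :=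
  stmt4_general m a
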